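/- Let a : [0,∞) → ℝ be C¹ with |a'(|x|²)| ≤ N(1+|x|²)^{(βs/(4n) − 1) + β/2} and a(|x|²) ≥ M(1+|x|²)^(β/2) for |x| > R, where β, s > 0 with βs ≥ 4n, M, N > 0, and a(t²) ≥ 0 for all t. Then for μ ≥ s, each i ∈ {1,…,n}, and |x| > R, the quantity |x_i · ∂_{x_i}[(1 + a(|x|²))^(−μ/2)]| is bounded by a constant independent of x. -/

import Mathlib

open Real

theorem stmt_5 (n : ℕ) (hn : 0 < n) (a : ℝ → ℝ) (β s M N R μ : ℝ)
    (hβ : 0 < β) (hs : 0 < s) (hβs : 4 * n ≤ β * s) (hM : 0 < M) (hN : 0 < N)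
    (ha : ContDiff ℝ 1 a)
    (hpos : ∀ t : ℝ, 0 ≤ a (t ^ 2))
    (hder : ∀ x : EuclideanSpace ℝ (Fin n), R < ‖x‖ →
      |deriv a (‖x‖ ^ 2)| ≤ N * (1 + ‖x‖ ^ 2) ^ ((β * s / (4 * n) - 1) + β / 2))
    (hell : ∀ x : EuclideanSpace ℝ (Fin n), R < ‖x‖ →
      M * (1 + ‖x‖ ^ 2) ^ (β / 2) ≤ a (‖x‖ ^ 2))
    (hμ : s ≤ μ) :
    ∃ B : ℝ, ∀ (i : Fin n) (x : EuclideanSpace ℝ (Fin n)), R < ‖x‖ →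
      |x i * fderiv ℝ (fun y : EuclideanSpace ℝ (Fin n) =>
          (1 + a (‖y‖ ^ 2)) ^ (-μ / 2)) x (EuclideanSpace.single i 1)| ≤ B := by
  have hμ0 : 0 < μ := hs.trans_le hμ
  set e : ℝ := -μ / 2 - 1 with he
  have he0 : e ≤ 0 := by rw [he]; nlinarith
  refine ⟨μ * N * M ^ e, fun i x hx => ?_⟩
  set t : ℝ := ‖x‖ ^ 2 with ht
  set T : ℝ := 1 + t with hT
  have hT1 : (1 : ℝ) ≤ T := by
    have : 0 ≤ t := by positivity
    linarith
  have hT0 : (0 : ℝ) < T := lt_of_lt_of_le one_pos hT1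
  have hat : 0 ≤ a t := hpos ‖x‖
  have hp : 0 < 1 + a t := by linarith
  -- derivative computation
  have h1 : HasFDerivAt (fun y : EuclideanSpace ℝ (Fin n) => ‖y‖ ^ 2)
      (2 • (innerSL ℝ x)) x := (hasStrictFDerivAt_norm_sq x).hasFDerivAt
  have haD : HasDerivAt a (deriv a t) t :=
    ((ha.differentiable one_ne_zero) t).hasDerivAt
  have h2a : HasDerivAt (fun u => 1 + a u) (deriv a t) t := haD.const_add 1
  have h2b : HasDerivAt (fun v : ℝ => v ^ (-μ / 2))
      ((-μ / 2) * (1 + a t) ^ (-μ / 2 - 1)) (1 + a t) :=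
    Real.hasDerivAt_rpow_const (Or.inl hp.ne')
  have h2 : HasDerivAt (fun u => (1 + a u) ^ (-μ / 2))
      ((-μ / 2) * (1 + a t) ^ (-μ / 2 - 1) * deriv a t) t := by have := h2b.comp t h2a; exact this
  have htot : HasFDerivAt (fun y : EuclideanSpace ℝ (Fin n) =>
      (1 + a (‖y‖ ^ 2)) ^ (-μ / 2))
      (((-μ / 2) * (1 + a t) ^ (-μ / 2 - 1) * deriv a t) • (2 • (innerSL ℝ x))) x :=
    by have := h2.comp_hasFDerivAt x h1; exact this
  rw [htot.fderiv]
  have happ : (((-μ / 2) * (1 + a t) ^ (-μ / 2 - 1) * deriv a t) • (2 • (innerSL ℝ x)))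
      (EuclideanSpace.single i 1)
      = ((-μ / 2) * (1 + a t) ^ (-μ / 2 - 1) * deriv a t) * (2 * (x i)) := by
    simp [real_inner_comm, EuclideanSpace.inner_single_left, EuclideanSpace.inner_single_right, mul_comm]
  rw [happ]
  have hq : x i * ((-μ / 2) * (1 + a t) ^ (-μ / 2 - 1) * deriv a t * (2 * x i))
      = -(μ * ((x i) ^ 2 * ((1 + a t) ^ e * deriv a t))) := by
    rw [he]; ring
  rw [hq, abs_neg, abs_mul, abs_of_nonneg hμ0.le, abs_mul, abs_sq, abs_mul,
    abs_of_nonneg (Real.rpow_nonneg hp.le e)]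
  -- now bound the three factors
  have hxi : (x i) ^ 2 ≤ T := by
    have h := EuclideanSpace.norm_eq x
    have hsum : ‖x‖ ^ 2 = ∑ j, ‖x j‖ ^ 2 := by
      rw [h, Real.sq_sqrt (by positivity)]
    have hle : ‖x i‖ ^ 2 ≤ ∑ j, ‖x j‖ ^ 2 :=
      Finset.single_le_sum (f := fun j => ‖x j‖ ^ 2) (fun j _ => by positivity)
        (Finset.mem_univ i)
    have : (x i) ^ 2 ≤ t := by
      rw [ht, hsum]
      simpa [Real.norm_eq_abs, sq_abs] using hle
    linarith
  have hpow : (1 + a t) ^ e ≤ M ^ e * T ^ (β / 2 * e) := by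
    have hbase : M * T ^ (β / 2) ≤ 1 + a t := le_trans (hell x hx) (by linarith)
    have hbpos : 0 < M * T ^ (β / 2) := by positivity
    calc (1 + a t) ^ e ≤ (M * T ^ (β / 2)) ^ e :=
          Real.rpow_le_rpow_of_nonpos hbpos hbase he0
      _ = M ^ e * T ^ (β / 2 * e) := by
          rw [Real.mul_rpow hM.le (by positivity), ← Real.rpow_mul hT0.le]
  have hder' : |deriv a t| ≤ N * T ^ ((β * s / (4 * n) - 1) + β / 2) := hder x hx
  calc μ * ((x i) ^ 2 * ((1 + a t) ^ e * |deriv a t|))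
      ≤ μ * (T * ((M ^ e * T ^ (β / 2 * e)) * (N * T ^ ((β * s / (4 * n) - 1) + β / 2)))) := by
        gcongr <;> first | exact Real.rpow_nonneg hp.le e | exact abs_nonneg _ | positivity
    _ = μ * N * M ^ e * (T ^ (1:ℝ) * (T ^ (β / 2 * e) * T ^ ((β * s / (4 * n) - 1) + β / 2))) := by
        rw [Real.rpow_one]; ring
    _ = μ * N * M ^ e * T ^ (1 + β / 2 * e + ((β * s / (4 * n) - 1) + β / 2)) := by
        rw [← Real.rpow_add hT0, ← Real.rpow_add hT0]
        congr 1
        ring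
    _ ≤ μ * N * M ^ e * 1 := by
        have hn1 : (1 : ℝ) ≤ (n : ℝ) := by exact_mod_cast hn
        have hexp : 1 + β / 2 * e + ((β * s / (4 * n) - 1) + β / 2) ≤ 0 := by
          have h1 : β * s / (4 * n) ≤ β * μ / 4 := by
            rw [div_le_div_iff₀ (by positivity) (by norm_num)]
            nlinarith [mul_le_mul_of_nonneg_left
              (hμ.trans (le_mul_of_one_le_right hμ0.le hn1)) hβ.le]
          rw [he]; nlinarith
        gcongr <;> first | exact Real.rpow_le_one_of_one_le_of_nonpos hT1 hexp | positivity
    _ = μ * N * M ^ e := mul_one _
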